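/- arXiv:2511.09934 — 9 statements merged into one kernel-verified Lean document; each statement's English description precedes it below -/
import Mathlib

section
/- For X ~ Binomial(n-1, 1/n), the expectation E[1/(2+X)] equals (1 + n(1 - 1/n)^(n+1)) / (n+1). -/
open Finset

lemma binom_sum (N : ℕ) (p q : ℝ) :
    ∑ k ∈ range (N+1), (N.choose k : ℝ) * p^k * q^(N-k) = (p+q)^N := by
  rw [add_pow]
  exact Finset.sum_congr rfl fun k hk => by ring

lemma binom_sum_weighted (N : ℕ) (p q : ℝ) :
    ∑ j ∈ range (N+2), (j : ℝ) * ((N+1).choose j) * p^j * q^(N+1-j)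
      = (N+1) * p * (p+q)^N := by
  rw [Finset.sum_range_succ']
  have h : ∀ i ∈ range (N+1),
      (((i+1 : ℕ)):ℝ) * ((N+1).choose (i+1)) * p^(i+1) * q^(N+1-(i+1))
        = (N+1) * p * ((N.choose i : ℝ) * p^i * q^(N-i)) := by
    intro i _
    have hc : ((N:ℝ)+1) * (N.choose i : ℝ) = ((N+1).choose (i+1) : ℝ) * ((i:ℝ)+1) := by
      exact_mod_cast congrArg (Nat.cast : ℕ → ℝ) (Nat.add_one_mul_choose_eq N i)
    have he : N + 1 - (i+1) = N - i := Nat.succ_sub_succ N i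
    rw [he]
    push_cast
    linear_combination (-(p^(i+1) * q^(N-i))) * hc
  rw [Finset.sum_congr rfl h, ← Finset.mul_sum, binom_sum]
  simp

lemma key_sum (m : ℕ) (p q : ℝ) :
    ∑ k ∈ range (m+1), ((k:ℝ)+1) * ((m+2).choose (k+2)) * p^(k+2) * q^(m-k)
      = (m+2) * p * (p+q)^(m+1) - (p+q)^(m+2) + q^(m+2) := by
  have hT : ∑ j ∈ range (m+3), ((j:ℝ)-1) * ((m+2).choose j) * p^j * q^(m+2-j)
      = (m+2) * p * (p+q)^(m+1) - (p+q)^(m+2) := by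
    have h1 := binom_sum_weighted (m+1) p q
    have h2 := binom_sum (m+2) p q
    have : ∑ j ∈ range (m+3), ((j:ℝ)-1) * ((m+2).choose j) * p^j * q^(m+2-j)
        = (∑ j ∈ range (m+3), (j:ℝ) * ((m+2).choose j) * p^j * q^(m+2-j))
          - ∑ j ∈ range (m+3), ((m+2).choose j : ℝ) * p^j * q^(m+2-j) := by
      rw [← Finset.sum_sub_distrib]
      exact Finset.sum_congr rfl fun j _ => by ring
    rw [this]
    have e1 : m + 3 = (m+1) + 2 := rfl
    have e2 : (((m:ℕ)+1+1 : ℕ) : ℝ) = (m:ℝ) + 2 := by push_cast; ring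
    rw [e1] at h1 ⊢
    push_cast at h1 h2 ⊢
    rw [h1, h2]; ring
  rw [Finset.sum_range_succ', Finset.sum_range_succ'] at hT
  simp only [Nat.cast_zero, Nat.cast_add, Nat.cast_one] at hT
  have h0 : ((0:ℝ)-1) * ((m+2).choose 0) * p^0 * q^(m+2-0) = -q^(m+2) := by simp
  have h1 : ((0:ℝ)+1-1) * ((m+2).choose (0+1)) * p^(0+1) * q^(m+2-(0+1)) = 0 := by ring
  have hcong : ∀ i ∈ range (m+1),
      (((i:ℝ)+1+1)-1) * ((m+2).choose (i+1+1)) * p^(i+1+1) * q^(m+2-(i+1+1))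
        = ((i:ℝ)+1) * ((m+2).choose (i+2)) * p^(i+2) * q^(m-i) := by
    intro i _
    have : m + 2 - (i+1+1) = m - i := by omega
    rw [this]
    ring_nf
  rw [Finset.sum_congr rfl hcong, h1, h0] at hT
  linarith [hT]

theorem binom_expectation_one_over_two_plus (n : ℕ) (hn : 1 ≤ n) :
    ∑ k ∈ Finset.range n,
      (1 / (2 + (k : ℝ))) * (Nat.choose (n - 1) k : ℝ) * (1 / n) ^ k * (1 - 1 / n) ^ (n - 1 - k)
    = (1 + n * (1 - 1 / (n : ℝ)) ^ (n + 1)) / (n + 1) := by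
  obtain ⟨m, rfl⟩ : ∃ m, n = m + 1 := ⟨n - 1, (Nat.succ_pred_eq_of_pos hn).symm⟩
  simp only [show m + 1 - 1 = m from rfl, show m + 1 + 1 = m + 2 from rfl]
  push_cast
  set p : ℝ := 1 / ((m:ℝ) + 1) with hp
  set q : ℝ := 1 - p with hq
  clear_value p
  clear_value q
  have hm1 : ((m:ℝ) + 1) ≠ 0 := by positivity
  have hm2 : ((m:ℝ) + 2) ≠ 0 := by positivity
  have hsum : p + q = 1 := by rw [hq]; ring
  have hkey := key_sum m p q
  rw [hsum, one_pow, one_pow] at hkey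
  have hterm : ∀ k ∈ range (m+1),
      ((k:ℝ)+1) * ((m+2).choose (k+2)) * p^(k+2) * q^(m-k)
        = ((m:ℝ)+1) * ((m:ℝ)+2) * p^2 *
          ((1 / (2 + (k:ℝ))) * (m.choose k : ℝ) * p^k * q^(m-k)) := by
    intro k _
    have hA := Nat.add_one_mul_choose_eq (m+1) (k+1)
    have hB := Nat.add_one_mul_choose_eq m k
    have hC : ((m:ℝ)+2) * (((m:ℝ)+1) * (m.choose k : ℝ))
        = ((m+2).choose (k+2) : ℝ) * ((k:ℝ)+2) * ((k:ℝ)+1) := by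
      have : (m+2) * ((m+1) * m.choose k) = ((m+2).choose (k+2)) * (k+2) * (k+1) := by
        rw [hB]
        calc (m+2) * ((m+1).choose (k+1) * (k+1))
            = ((m+2) * (m+1).choose (k+1)) * (k+1) := by ring
          _ = ((m+2).choose (k+2) * (k+2)) * (k+1) := by rw [← hA]
          _ = _ := by ring
      exact_mod_cast congrArg (Nat.cast : ℕ → ℝ) this
    have h2k : (2 + (k:ℝ)) ≠ 0 := by positivity
    field_simp
    linear_combination (-(p^(k+2) * q^(m-k))) * hC
  rw [Finset.sum_congr rfl hterm, ← Finset.mul_sum] at hkey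
  have hp2 : ((m:ℝ)+1) * ((m:ℝ)+2) * p^2 ≠ 0 := by
    rw [hp]; positivity
  have hgoal : ∑ k ∈ range (m+1),
      (1 / (2 + (k:ℝ))) * (m.choose k : ℝ) * p^k * q^(m-k)
      = (1 + ((m:ℝ)+1) * q^(m+2)) / ((m:ℝ)+2) := by
    apply mul_left_cancel₀ hp2
    rw [hkey, hp]
    field_simp
    ring
  rw [hgoal]
  ring_nf
end

section
/- For Y ~ Binomial(n-2, 1/n), the expectation E[1/(2+Y)] equals (1 - 1/n)^(n-1). -/
open Finset

lemma sum_deriv_binom (n : ℕ) (x y : ℝ) :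
    ∑ j ∈ range (n + 2), (j : ℝ) * ((n+1).choose j : ℝ) * x ^ j * y ^ (n + 1 - j)
      = (n + 1 : ℝ) * x * (x + y) ^ n := by
  rw [Finset.sum_range_succ']
  push_cast
  simp only [zero_mul, add_zero]
  have h : ∀ i ∈ range (n + 1),
      ((i : ℝ) + 1) * ((n+1).choose (i+1) : ℝ) * x ^ (i+1) * y ^ (n - i)
        = ((n+1 : ℝ) * x) * (x ^ i * y ^ (n - i) * (n.choose i : ℝ)) := by
    intro i _
    have h2 : ((n+1 : ℕ) * n.choose i : ℝ) = (((n+1).choose (i+1) * (i+1) : ℕ) : ℝ) := by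
      exact_mod_cast congrArg (Nat.cast : ℕ → ℝ) (Nat.add_one_mul_choose_eq n i)
    push_cast at h2
    rw [pow_succ]
    linear_combination (x ^ i * x * y ^ (n - i)) * h2.symm
  rw [Finset.sum_congr rfl h, ← Finset.mul_sum, ← add_pow]

theorem binom_expectation_one_over_two_plus_Y (n : ℕ) (hn : 2 ≤ n) :
    ∑ k ∈ Finset.range (n - 1),
      (1 / (2 + (k : ℝ))) * (Nat.choose (n - 2) k : ℝ) * (1 / n) ^ k * (1 - 1 / n) ^ (n - 2 - k)
    = (1 - 1 / (n : ℝ)) ^ (n - 1) := by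
  obtain ⟨m, rfl⟩ : ∃ m, n = m + 2 := ⟨n - 2, by omega⟩
  clear hn
  have hm1 : m + 2 - 1 = m + 1 := rfl
  have hm2 : m + 2 - 2 = m := rfl
  simp only [hm1, hm2]
  set x : ℝ := 1 / ((m : ℝ) + 2) with hx
  have hN : ((m : ℝ) + 2) ≠ 0 := by positivity
  have hcastN : ((m + 2 : ℕ) : ℝ) = (m : ℝ) + 2 := by push_cast; ring
  rw [hcastN]
  set y : ℝ := 1 - x with hy
  have hxy : x + y = 1 := by ring
  -- the auxiliary function
  set f : ℕ → ℝ := fun j => ((j : ℝ) - 1) * ((m+2).choose j : ℝ) * x ^ j * y ^ (m + 2 - j)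
    with hf
  have hFull : ∑ j ∈ range (m + 3), f j = 0 := by
    have hA := sum_deriv_binom (m + 1) x y
    have hB := add_pow x y (m + 2)
    have : ∑ j ∈ range (m + 3), f j
        = (∑ j ∈ range (m + 3), (j : ℝ) * ((m+2).choose j : ℝ) * x ^ j * y ^ (m + 2 - j))
          - ∑ j ∈ range (m + 3), x ^ j * y ^ (m + 2 - j) * ((m+2).choose j : ℝ) := by
      rw [← Finset.sum_sub_distrib]
      exact Finset.sum_congr rfl (fun j _ => by simp only [hf]; ring)
    rw [this]
    have e1 : m + 3 = (m + 1) + 2 := by ring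
    have e2 : m + 2 = (m + 1) + 1 := by ring
    rw [e1, e2, hA, ← hB, hxy]
    push_cast
    rw [one_pow, one_pow, hx]
    field_simp
    ring
  have hT : ∑ k ∈ range (m + 1), f (k + 2) = y ^ (m + 2) := by
    have h1 : ∑ j ∈ range (m + 3), f j
        = (∑ i ∈ range (m + 2), f (i + 1)) + f 0 := Finset.sum_range_succ' f (m + 2)
    have h2 : ∑ i ∈ range (m + 2), f (i + 1)
        = (∑ k ∈ range (m + 1), f (k + 2)) + f 1 :=
      Finset.sum_range_succ' (fun i => f (i + 1)) (m + 1)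
    have hf0 : f 0 = -(y ^ (m + 2)) := by simp [hf]
    have hf1 : f 1 = 0 := by simp [hf]
    rw [h2, hf0, hf1, hFull] at h1
    linarith
  -- termwise identity
  have hterm : ∀ k ∈ range (m + 1),
      (1 / (2 + (k : ℝ))) * ((m).choose k : ℝ) * x ^ k * y ^ (m - k)
        = (((m : ℝ) + 2) ^ 2 / (((m : ℝ) + 1) * ((m : ℝ) + 2))) * f (k + 2) := by
    intro k _
    have hnat : (m + 2) * ((m + 1) * Nat.choose m k)
        = (Nat.choose (m+2) (k+2) * (k+2)) * (k+1) := by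
      rw [Nat.add_one_mul_choose_eq m k, ← Nat.mul_assoc (m+2), Nat.add_one_mul_choose_eq (m+1) (k+1)]
    have hcast : ((m : ℝ) + 2) * (((m : ℝ) + 1) * ((m).choose k : ℝ))
        = (((m+2).choose (k+2) : ℝ) * ((k : ℝ)+2)) * ((k : ℝ)+1) := by
      exact_mod_cast congrArg (Nat.cast : ℕ → ℝ) hnat
    have hk : (2 + (k : ℝ)) ≠ 0 := by positivity
    have hsub : m + 2 - (k + 2) = m - k := by omega
    simp only [hf, hsub]
    push_cast
    have hCm : ((m).choose k : ℝ)
        = ((k : ℝ)+1) * (((m+2).choose (k+2) : ℕ) : ℝ) * (2+(k : ℝ))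
            / (((m : ℝ)+1) * ((m : ℝ)+2)) := by
      rw [eq_div_iff (by positivity)]
      linear_combination hcast
    rw [hCm, hx]
    field_simp
    have ha : (2 + (m:ℝ))⁻¹ * (2 + (m:ℝ)) = 1 := inv_mul_cancel₀ (by positivity)
    linear_combination (-((k:ℝ)+1) * (((m+2).choose (k+2) : ℕ) : ℝ) * (2 + (m:ℝ))⁻¹ ^ k * y ^ (m - k) * (1 + (2 + (m:ℝ))⁻¹ * (2 + (m:ℝ)))) * ha
  rw [Finset.sum_congr rfl hterm, ← Finset.mul_sum, hT]
  have hyv : y = ((m : ℝ) + 1) / ((m : ℝ) + 2) := by rw [hy, hx]; field_simp; ring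
  have hcy : (((m : ℝ) + 2) ^ 2 / (((m : ℝ) + 1) * ((m : ℝ) + 2))) * y = 1 := by
    rw [hyv]; field_simp
  calc (((m : ℝ) + 2) ^ 2 / (((m : ℝ) + 1) * ((m : ℝ) + 2))) * y ^ (m + 2)
      = ((((m : ℝ) + 2) ^ 2 / (((m : ℝ) + 1) * ((m : ℝ) + 2))) * y) * y ^ (m + 1) := by ring
    _ = y ^ (m + 1) := by rw [hcy, one_mul]
end

section
/- For Y ~ Binomial(n-2, 1/n), the expectation E[1/(3+Y)] equals (n/(n+1)) * (1 - 2(1 - 1/n)^n). -/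
open Finset

lemma chooseId (m k : ℕ) : (m+1)*(m+2)*(m+3) * m.choose k = (k+1)*(k+2)*(k+3) * (m+3).choose (k+3) := by
  have h1 := Nat.add_one_mul_choose_eq m k
  have h2 := Nat.add_one_mul_choose_eq (m+1) (k+1)
  have h3 := Nat.add_one_mul_choose_eq (m+2) (k+2)
  simp only [Nat.add_assoc, Nat.reduceAdd] at h1 h2 h3
  calc (m+1)*(m+2)*(m+3) * m.choose k = (m+2)*(m+3)*((m+1)*m.choose k) := by ring
    _ = (m+2)*(m+3)*((m+1).choose (k+1) * (k+1)) := by rw [h1]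
    _ = (m+3)*(k+1)*((m+2)*(m+1).choose (k+1)) := by ring
    _ = (m+3)*(k+1)*((m+2).choose (k+2) * (k+2)) := by rw [h2]
    _ = (k+1)*(k+2)*((m+3)*(m+2).choose (k+2)) := by ring
    _ = (k+1)*(k+2)*((m+3).choose (k+3) * (k+3)) := by rw [h3]
    _ = (k+1)*(k+2)*(k+3)*(m+3).choose (k+3) := by ring

lemma bernA (N : ℕ) (x : ℝ) : ∑ j ∈ Finset.range (N+1), (N.choose j : ℝ) * x^j * (1-x)^(N-j) = 1 := by
  have := congrArg (Polynomial.eval x) (bernsteinPolynomial.sum ℝ N)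
  simpa [bernsteinPolynomial, Polynomial.eval_finset_sum] using this

lemma bernB (N : ℕ) (x : ℝ) : ∑ j ∈ Finset.range (N+1), (j:ℝ) * ((N.choose j : ℝ) * x^j * (1-x)^(N-j)) = N * x := by
  have := congrArg (Polynomial.eval x) (bernsteinPolynomial.sum_smul ℝ N)
  simpa [bernsteinPolynomial, Polynomial.eval_finset_sum, mul_assoc] using this

lemma bernC (N : ℕ) (x : ℝ) : ∑ j ∈ Finset.range (N+1), (j:ℝ)*((j:ℝ)-1) * ((N.choose j : ℝ) * x^j * (1-x)^(N-j)) = (N:ℝ)*((N:ℝ)-1) * x^2 := by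
  have := congrArg (Polynomial.eval x) (bernsteinPolynomial.sum_mul_smul ℝ N)
  simp only [bernsteinPolynomial, Polynomial.eval_finset_sum] at this
  have hcast : ∀ j : ℕ, ((j*(j-1) : ℕ):ℝ) = (j:ℝ)*((j:ℝ)-1) := by
    rintro (_|j) <;> push_cast <;> ring
  calc ∑ j ∈ Finset.range (N+1), (j:ℝ)*((j:ℝ)-1) * ((N.choose j : ℝ) * x^j * (1-x)^(N-j))
      = ∑ j ∈ Finset.range (N+1), ((j*(j-1):ℕ):ℝ) * ((N.choose j : ℝ) * x^j * (1-x)^(N-j)) := by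
        refine Finset.sum_congr rfl fun j _ => ?_; rw [hcast]
    _ = ((N*(N-1):ℕ):ℝ) * x^2 := by
        simpa [mul_assoc] using this
    _ = (N:ℝ)*((N:ℝ)-1) * x^2 := by rw [hcast]

theorem binom_expectation_one_over_three_plus_Y (n : ℕ) (hn : 2 ≤ n) :
    ∑ k ∈ Finset.range (n - 1),
      (1 / (3 + (k : ℝ))) * (Nat.choose (n - 2) k : ℝ) * (1 / n) ^ k * (1 - 1 / n) ^ (n - 2 - k)
    = ((n : ℝ) / (n + 1)) * (1 - 2 * (1 - 1 / n) ^ n) := by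
  obtain ⟨m, rfl⟩ : ∃ m, n = m + 2 := ⟨n - 2, by omega⟩
  clear hn
  have hsimp : m + 2 - 1 = m + 1 := by omega
  have hsimp2 : m + 2 - 2 = m := by omega
  rw [hsimp, hsimp2]
  set x : ℝ := 1 / ((m:ℝ) + 2) with hx
  have hcast : ((m+2:ℕ):ℝ) = (m:ℝ) + 2 := by push_cast; ring
  rw [hcast]
  have hm2 : ((m:ℝ) + 2) ≠ 0 := by positivity
  -- F j
  set F : ℕ → ℝ := fun j => ((m+3).choose j : ℝ) * x^j * (1-x)^(m+3-j) with hF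
  set g : ℕ → ℝ := fun j => ((j:ℝ)-1)*((j:ℝ)-2) * F j with hg
  -- total sum of g
  have hT : ∑ j ∈ Finset.range (m+3+1), g j
      = ((m:ℝ)+3)*((m:ℝ)+2)*x^2 - 2*((m:ℝ)+3)*x + 2 := by
    have e : ∀ j ∈ Finset.range (m+3+1), g j
        = (j:ℝ)*((j:ℝ)-1) * (((m+3).choose j : ℝ) * x^j * (1-x)^(m+3-j))
          - 2*((j:ℝ) * (((m+3).choose j : ℝ) * x^j * (1-x)^(m+3-j)))
          + 2*(((m+3).choose j : ℝ) * x^j * (1-x)^(m+3-j)) := by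
      intro j _; simp only [hg, hF]; ring
    rw [Finset.sum_congr rfl e]
    rw [Finset.sum_add_distrib, Finset.sum_sub_distrib, ← Finset.mul_sum, ← Finset.mul_sum]
    rw [bernA (m+3) x, bernB (m+3) x, bernC (m+3) x]
    push_cast
    ring_nf
  -- peel off first three terms
  have hpeel : ∑ j ∈ Finset.range (m+3+1), g j
      = (∑ k ∈ Finset.range (m+1), g (k+3)) + g 2 + g 1 + g 0 := by
    rw [Finset.sum_range_succ' g (m+3)]
    rw [show m+3 = (m+2)+1 by omega, Finset.sum_range_succ' (fun i => g (i+1)) (m+2)]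
    rw [show m+2 = (m+1)+1 by omega, Finset.sum_range_succ' (fun i => g (i+1+1)) (m+1)]

  have hg0 : g 0 = 2 * (1-x)^(m+3) := by simp [hg, hF]
  have hg1 : g 1 = 0 := by simp [hg]
  have hg2 : g 2 = 0 := by norm_num [hg]
  have hS : ∑ k ∈ Finset.range (m+1), g (k+3)
      = ((m:ℝ)+3)*((m:ℝ)+2)*x^2 - 2*((m:ℝ)+3)*x + 2 - 2*(1-x)^(m+3) := by
    have := hpeel.symm.trans hT
    rw [hg0, hg1, hg2] at this
    linarith
  -- multiply each original term by D
  set D : ℝ := ((m:ℝ)+1)*((m:ℝ)+2)*((m:ℝ)+3) * x^3 with hD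
  have hterm : ∀ k ∈ Finset.range (m+1),
      D * ((1 / (3 + (k : ℝ))) * (m.choose k : ℝ) * x ^ k * (1 - x) ^ (m - k)) = g (k+3) := by
    intro k _
    have hc : (((m+1)*(m+2)*(m+3) * m.choose k : ℕ) : ℝ)
        = (((k+1)*(k+2)*(k+3) * (m+3).choose (k+3) : ℕ) : ℝ) := by exact_mod_cast congrArg Nat.cast (chooseId m k)
    push_cast at hc
    have h3k : (3:ℝ) + (k:ℝ) ≠ 0 := by positivity
    have hsub : m + 3 - (k + 3) = m - k := by omega
    simp only [hg, hF, hsub]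
    have hxpow : x ^ (k+3) = x^3 * x^k := by ring
    rw [hxpow]
    rw [hD]
    push_cast
    field_simp
    linear_combination (x^3 * x^k * (1-x)^(m-k)) * hc
  have hDsum : D * (∑ k ∈ Finset.range (m+1),
      (1 / (3 + (k : ℝ))) * (m.choose k : ℝ) * x ^ k * (1 - x) ^ (m - k))
      = ((m:ℝ)+3)*((m:ℝ)+2)*x^2 - 2*((m:ℝ)+3)*x + 2 - 2*(1-x)^(m+3) := by
    rw [Finset.mul_sum, Finset.sum_congr rfl hterm, hS]
  -- conclude
  have hDne : D ≠ 0 := by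
    rw [hD, hx]; positivity
  rw [← hx]
  have hpow : (1-x)^(m+3) = (1-x)^(m+2) * (1-x) := by rw [← pow_succ]
  apply mul_left_cancel₀ hDne
  rw [hDsum, hpow]
  set t := (1-x)^(m+2) with ht
  rw [hD, hx]
  field_simp
  ring
end

section
/- Let k ≤ m with X ~ Binomial(k, 1/m) and Y ~ Binomial(m-k, 1/m) independent. Then E[(X/(X+Y)) · 1{X > 0}] = (k/m)(1 - (1 - 1/m)^m). -/
open Finset

lemma aux_vand (m k n : ℕ) (hk1 : 1 ≤ k) (hk : k ≤ m) (hn : 1 ≤ n) :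
    ∑ i ∈ Finset.range (n+1), i * k.choose i * (m-k).choose (n-i)
      = k * (m-1).choose (n-1) := by
  rw [Finset.sum_range_succ']
  simp only [Nat.zero_mul, Nat.choose_zero_right, zero_mul, add_zero]
  have h1 : ∀ i, (i+1) * k.choose (i+1) * (m-k).choose (n-(i+1))
      = k * ((k-1).choose i * (m-k).choose ((n-1)-i)) := by
    intro i
    have h2 : (k-1).succ * (k-1).choose i = (k-1).succ.choose (i+1) * (i+1) :=
      Nat.add_one_mul_choose_eq (k-1) i
    have h3 : (k-1).succ = k := by omega
    rw [h3] at h2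
    have h4 : n - (i+1) = (n-1) - i := by omega
    rw [h4]
    calc (i+1) * k.choose (i+1) * (m-k).choose ((n-1)-i)
        = (k.choose (i+1) * (i+1)) * (m-k).choose ((n-1)-i) := by ring
      _ = (k * (k-1).choose i) * (m-k).choose ((n-1)-i) := by rw [← h2]
      _ = k * ((k-1).choose i * (m-k).choose ((n-1)-i)) := by ring
  calc ∑ i ∈ Finset.range n, (i+1) * k.choose (i+1) * (m-k).choose (n-(i+1))
      = ∑ i ∈ Finset.range n, k * ((k-1).choose i * (m-k).choose ((n-1)-i)) := by
        exact Finset.sum_congr rfl fun i _ => h1 i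
    _ = k * ∑ i ∈ Finset.range n, (k-1).choose i * (m-k).choose ((n-1)-i) := by
        rw [Finset.mul_sum]
    _ = k * (m-1).choose (n-1) := by
        congr 1
        have := Nat.add_choose_eq (k-1) (m-k) (n-1)
        rw [Finset.Nat.sum_antidiagonal_eq_sum_range_succ_mk] at this
        have hr : (n-1).succ = n := by omega
        rw [hr] at this
        have hkm : k - 1 + (m - k) = m - 1 := by omega
        rw [hkm] at this
        exact this.symm

theorem binom_ratio_indicator (m k : ℕ) (hm : 1 ≤ m) (hk : k ≤ m) :
    ∑ i ∈ Finset.range (k + 1), ∑ j ∈ Finset.range (m - k + 1),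
      ((Nat.choose k i : ℝ) * (1 / m) ^ i * (1 - 1 / m) ^ (k - i)) *
        ((Nat.choose (m - k) j : ℝ) * (1 / m) ^ j * (1 - 1 / m) ^ (m - k - j)) *
        (if 0 < i then (i : ℝ) / ((i : ℝ) + (j : ℝ)) else 0)
    = ((k : ℝ) / m) * (1 - (1 - 1 / m) ^ m) := by
  rcases Nat.eq_zero_or_pos k with hk0 | hk1
  · subst hk0; simp
  have hm0 : (m : ℝ) ≠ 0 := by positivity
  set p : ℝ := 1 / m with hp
  set q : ℝ := 1 - 1 / m with hq
  have hpq : p + q = 1 := by rw [hp, hq]; ring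
  set F : ℕ → ℕ → ℝ := fun i j =>
    (Nat.choose k i : ℝ) * (Nat.choose (m-k) j : ℝ) * p ^ (i+j) * q ^ (m - (i+j)) *
      (if 0 < i then (i : ℝ) / ((i : ℝ) + (j : ℝ)) else 0) with hF
  -- Step A: rewrite LHS as double sum of F over extended ranges
  have stepA : ∑ i ∈ Finset.range (k + 1), ∑ j ∈ Finset.range (m - k + 1),
      ((Nat.choose k i : ℝ) * p ^ i * q ^ (k - i)) *
        ((Nat.choose (m - k) j : ℝ) * p ^ j * q ^ (m - k - j)) *
        (if 0 < i then (i : ℝ) / ((i : ℝ) + (j : ℝ)) else 0)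
      = ∑ i ∈ Finset.range (m + 1), ∑ j ∈ Finset.range (m + 1 - i), F i j := by
    have h1 : ∀ i ∈ Finset.range (k+1), ∀ j ∈ Finset.range (m-k+1),
        ((Nat.choose k i : ℝ) * p ^ i * q ^ (k - i)) *
          ((Nat.choose (m - k) j : ℝ) * p ^ j * q ^ (m - k - j)) *
          (if 0 < i then (i : ℝ) / ((i : ℝ) + (j : ℝ)) else 0) = F i j := by
      intro i hi j hj
      simp only [Finset.mem_range] at hi hj
      rw [hF]
      have e1 : m - (i+j) = (k - i) + (m - k - j) := by omega
      simp only [e1, pow_add]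
      ring
    rw [Finset.sum_congr rfl fun i hi => Finset.sum_congr rfl fun j hj => h1 i hi j hj]
    -- extend inner range
    have h2 : ∀ i ∈ Finset.range (k+1),
        ∑ j ∈ Finset.range (m-k+1), F i j = ∑ j ∈ Finset.range (m+1-i), F i j := by
      intro i hi
      simp only [Finset.mem_range] at hi
      apply Finset.sum_subset
      · apply Finset.range_subset_range.2; omega
      · intro j _ hj
        simp only [Finset.mem_range, not_lt] at hj
        have : (m-k).choose j = 0 := Nat.choose_eq_zero_of_lt (by omega)
        simp [hF, this]
    rw [Finset.sum_congr rfl h2]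
    apply Finset.sum_subset
    · apply Finset.range_subset_range.2; omega
    · intro i _ hi
      simp only [Finset.mem_range, not_lt] at hi
      apply Finset.sum_eq_zero
      intro j _
      have : k.choose i = 0 := Nat.choose_eq_zero_of_lt (by omega)
      simp [hF, this]
  -- Step B: diagonal flip
  have stepB : ∑ i ∈ Finset.range (m + 1), ∑ j ∈ Finset.range (m + 1 - i), F i j
      = ∑ n ∈ Finset.range (m + 1), ∑ i ∈ Finset.range (n + 1), F i (n - i) :=
    (Finset.sum_range_diag_flip (m+1) F).symm
  -- Step C: inner diagonal sums
  have stepC : ∀ n ∈ Finset.range (m+1),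
      ∑ i ∈ Finset.range (n + 1), F i (n - i)
        = (k : ℝ) / m * ((m.choose n : ℝ) * p ^ n * q ^ (m - n))
          - (if n = 0 then (k : ℝ) / m * q ^ m else 0) := by
    intro n hn
    simp only [Finset.mem_range] at hn
    rcases Nat.eq_zero_or_pos n with h0 | h1
    · subst h0
      simp [hF]
    · have hn0 : (n : ℝ) ≠ 0 := by positivity
      have hne : n ≠ 0 := by omega
      simp only [if_neg hne, sub_zero]
      have h3 : ∀ i ∈ Finset.range (n+1),
          F i (n - i) = ((i : ℝ) * (k.choose i : ℝ) * ((m-k).choose (n-i) : ℝ))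
            * p ^ n * q ^ (m - n) / n := by
        intro i hi
        simp only [Finset.mem_range] at hi
        simp only [hF]
        have e1 : i + (n - i) = n := by omega
        rw [e1]
        rcases Nat.eq_zero_or_pos i with hi0 | hi1
        · subst hi0; simp
        · rw [if_pos hi1]
          have e2 : (i : ℝ) + ((n - i : ℕ) : ℝ) = (n : ℝ) := by
            rw [Nat.cast_sub (by omega : i ≤ n)]
            ring
          rw [e2]
          ring
      rw [Finset.sum_congr rfl h3]
      have h4 : ∑ i ∈ Finset.range (n+1),
          ((i : ℝ) * (k.choose i : ℝ) * ((m-k).choose (n-i) : ℝ)) * p ^ n * q ^ (m - n) / n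
          = (∑ i ∈ Finset.range (n+1), ((i : ℝ) * (k.choose i : ℝ) * ((m-k).choose (n-i) : ℝ)))
            * p ^ n * q ^ (m - n) / n := by
        rw [← Finset.sum_div, ← Finset.sum_mul, ← Finset.sum_mul]
      rw [h4]
      have h5 : (∑ i ∈ Finset.range (n+1), ((i : ℝ) * (k.choose i : ℝ) * ((m-k).choose (n-i) : ℝ)))
          = (k : ℝ) * ((m-1).choose (n-1) : ℝ) := by
        have := aux_vand m k n hk1 hk h1
        have := congrArg (Nat.cast : ℕ → ℝ) this
        push_cast at this
        convert this using 2
      rw [h5]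
      -- m * C(m-1,n-1) = C(m,n) * n
      have h6 : ((m : ℝ)) * ((m-1).choose (n-1) : ℝ) = (m.choose n : ℝ) * n := by
        have := Nat.add_one_mul_choose_eq (m-1) (n-1)
        have hm1 : (m-1).succ = m := by omega
        have hn1 : (n-1).succ = n := by omega
        rw [show m - 1 + 1 = m by omega, show n - 1 + 1 = n by omega] at this
        exact_mod_cast congrArg (Nat.cast : ℕ → ℝ) this
      field_simp
      linear_combination (p ^ n * q ^ (m - n)) * h6
  rw [stepA, stepB, Finset.sum_congr rfl stepC, Finset.sum_sub_distrib]
  rw [Finset.sum_ite_eq' (Finset.range (m+1)) 0]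
  simp only [Finset.mem_range, Nat.zero_lt_succ, if_pos]
  have h7 : ∑ n ∈ Finset.range (m+1), (k : ℝ) / m * ((m.choose n : ℝ) * p ^ n * q ^ (m - n))
      = (k : ℝ) / m * (p + q) ^ m := by
    rw [add_pow, Finset.mul_sum]
    apply Finset.sum_congr rfl
    intro n _
    ring
  rw [h7, hpq]
  ring
end

section
/- Let k ≤ m with X ~ Binomial(k, 1/m) and Y ~ Binomial(m-k, 1/m) independent. Then E[X/(1+X+Y)] = (k/m) · (1 + m(1 - 1/m)^(m+1))/(m+1). -/
open Finset

section helpers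

lemma choose_one (n t : ℕ) :
    ((t : ℝ) + 1) * ((n + 1).choose (t + 1)) = ((n : ℝ) + 1) * (n.choose t) := by
  have h := Nat.add_one_mul_choose_eq n t
  have h' : ((n + 1) * n.choose t : ℝ) = (((n + 1).choose (t + 1)) * (t + 1) : ℝ) := by
    exact_mod_cast congrArg (Nat.cast : ℕ → ℝ) h
  push_cast at h'
  linear_combination -h'

lemma choose_two (n t : ℕ) :
    ((t : ℝ) + 1) * ((t : ℝ) + 2) * ((n + 2).choose (t + 2)) =
      ((n : ℝ) + 1) * ((n : ℝ) + 2) * (n.choose t) := by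
  have h1 := choose_one n t
  have h2 := choose_one (n + 1) (t + 1)
  push_cast at h2
  linear_combination ((t:ℝ)+1) * h2 + ((n:ℝ)+2) * h1

lemma conv_lemma (a b : ℕ) (p q : ℝ) (f : ℕ → ℝ) :
    ∑ i ∈ range (a + 1), ∑ j ∈ range (b + 1),
      ((a.choose i : ℝ) * p ^ i * q ^ (a - i)) * ((b.choose j : ℝ) * p ^ j * q ^ (b - j)) * f (i + j)
    = ∑ t ∈ range (a + b + 1), ((a + b).choose t : ℝ) * p ^ t * q ^ (a + b - t) * f t := by
  rw [← Finset.sum_product']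
  rw [← Finset.sum_fiberwise_of_maps_to (t := range (a + b + 1)) (g := fun x : ℕ × ℕ => x.1 + x.2)
      (fun x hx => by
        simp only [mem_product, mem_range] at hx
        simp only [mem_range]; omega)]
  refine Finset.sum_congr rfl fun t ht => ?_
  have key : ∀ x ∈ (range (a+1) ×ˢ range (b+1)).filter (fun x : ℕ × ℕ => x.1 + x.2 = t),
      ((a.choose x.1 : ℝ) * p ^ x.1 * q ^ (a - x.1)) * ((b.choose x.2 : ℝ) * p ^ x.2 * q ^ (b - x.2)) * f (x.1 + x.2)
      = ((a.choose x.1 * b.choose x.2 : ℕ) : ℝ) * (p ^ t * q ^ (a + b - t) * f t) := by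
    intro x hx
    simp only [mem_filter, mem_product, mem_range] at hx
    obtain ⟨⟨h1, h2⟩, h3⟩ := hx
    have e1 : p ^ x.1 * p ^ x.2 = p ^ t := by rw [← pow_add, h3]
    have e2 : q ^ (a - x.1) * q ^ (b - x.2) = q ^ (a + b - t) := by
      rw [← pow_add]; congr 1; omega
    rw [h3]
    push_cast
    calc ((a.choose x.1 : ℝ) * p ^ x.1 * q ^ (a - x.1)) * ((b.choose x.2 : ℝ) * p ^ x.2 * q ^ (b - x.2)) * f t
        = (a.choose x.1 : ℝ) * (b.choose x.2 : ℝ) * ((p ^ x.1 * p ^ x.2) * (q ^ (a - x.1) * q ^ (b - x.2)) * f t) := by ring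
      _ = _ := by rw [e1, e2]
  rw [Finset.sum_congr rfl key, ← Finset.sum_mul]
  have hcast : ∑ x ∈ (range (a+1) ×ˢ range (b+1)).filter (fun x : ℕ × ℕ => x.1 + x.2 = t),
      ((a.choose x.1 * b.choose x.2 : ℕ) : ℝ) = (((a + b).choose t : ℕ) : ℝ) := by
    rw [← Nat.cast_sum]
    congr 1
    rw [Nat.add_choose_eq]
    apply Finset.sum_subset
    · intro x hx
      simp only [mem_filter, mem_product, mem_range] at hx
      simp [Finset.mem_antidiagonal, hx.2]
    · intro x hx hnx
      rw [Finset.HasAntidiagonal.mem_antidiagonal] at hx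
      have hor : a < x.1 ∨ b < x.2 := by
        by_contra hc
        push_neg at hc
        exact hnx (Finset.mem_filter.2 ⟨Finset.mem_product.2
          ⟨Finset.mem_range.2 (by omega), Finset.mem_range.2 (by omega)⟩, hx⟩)
      rcases hor with h | h
      · rw [Nat.choose_eq_zero_of_lt h, zero_mul]
      · rw [Nat.choose_eq_zero_of_lt h, mul_zero]
  rw [hcast]
  ring

lemma binom_tail1 (n : ℕ) (p q : ℝ) :
    (p + q) ^ (n + 1)
      = (∑ t ∈ range (n + 1), ((n + 1).choose (t + 1) : ℝ) * p ^ (t + 1) * q ^ (n - t))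
        + q ^ (n + 1) := by
  rw [add_pow, Finset.sum_range_succ']
  congr 1
  · exact Finset.sum_congr rfl fun t ht => by rw [Nat.succ_sub_succ]; ring
  · simp

lemma binom_tail2 (n : ℕ) (p q : ℝ) :
    (p + q) ^ (n + 2)
      = (∑ t ∈ range (n + 1), ((n + 2).choose (t + 2) : ℝ) * p ^ (t + 2) * q ^ (n - t))
        + ((n : ℝ) + 2) * p * q ^ (n + 1) + q ^ (n + 2) := by
  rw [add_pow, Finset.sum_range_succ', Finset.sum_range_succ']
  have e1 : ∀ t ∈ range (n + 1),
      p ^ (t + 1 + 1) * q ^ (n + 2 - (t + 1 + 1)) * ((n + 2).choose (t + 1 + 1) : ℝ)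
      = ((n + 2).choose (t + 2) : ℝ) * p ^ (t + 2) * q ^ (n - t) := by
    intro t ht
    have : n + 2 - (t + 1 + 1) = n - t := by omega
    rw [this]; ring
  rw [Finset.sum_congr rfl e1]
  have e2 : p ^ (0 + 1) * q ^ (n + 2 - (0 + 1)) * ((n + 2).choose (0 + 1) : ℝ)
      = ((n : ℝ) + 2) * p * q ^ (n + 1) := by
    simp [Nat.choose_one_right]
    ring
  rw [e2]
  simp

lemma sum_div_one (n : ℕ) (p q : ℝ) (hp : p ≠ 0) :
    ∑ t ∈ range (n + 1), (n.choose t : ℝ) * p ^ t * q ^ (n - t) / ((t : ℝ) + 1)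
      = ((p + q) ^ (n + 1) - q ^ (n + 1)) / (((n : ℝ) + 1) * p) := by
  have hn1 : ((n : ℝ) + 1) * p ≠ 0 := mul_ne_zero (by positivity) hp
  rw [eq_div_iff hn1, Finset.sum_mul]
  have key : ∀ t ∈ range (n + 1),
      (n.choose t : ℝ) * p ^ t * q ^ (n - t) / ((t : ℝ) + 1) * (((n : ℝ) + 1) * p)
      = ((n + 1).choose (t + 1) : ℝ) * p ^ (t + 1) * q ^ (n - t) := by
    intro t ht
    have h1 : ((t : ℝ) + 1) ≠ 0 := by positivity
    have hc := choose_one n t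
    field_simp
    linear_combination -(p ^ (t + 1) * q ^ (n - t)) * hc
  rw [Finset.sum_congr rfl key, binom_tail1 n p q]
  ring

lemma sum_div_two (n : ℕ) (p q : ℝ) (hp : p ≠ 0) :
    ∑ t ∈ range (n + 1), (n.choose t : ℝ) * p ^ t * q ^ (n - t) / (((t : ℝ) + 1) * ((t : ℝ) + 2))
      = ((p + q) ^ (n + 2) - q ^ (n + 2) - ((n : ℝ) + 2) * p * q ^ (n + 1))
          / (((n : ℝ) + 1) * ((n : ℝ) + 2) * p ^ 2) := by
  have hn1 : ((n : ℝ) + 1) * ((n : ℝ) + 2) * p ^ 2 ≠ 0 := by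
    apply mul_ne_zero (by positivity) (pow_ne_zero 2 hp)
  rw [eq_div_iff hn1, Finset.sum_mul]
  have key : ∀ t ∈ range (n + 1),
      (n.choose t : ℝ) * p ^ t * q ^ (n - t) / (((t : ℝ) + 1) * ((t : ℝ) + 2))
          * (((n : ℝ) + 1) * ((n : ℝ) + 2) * p ^ 2)
      = ((n + 2).choose (t + 2) : ℝ) * p ^ (t + 2) * q ^ (n - t) := by
    intro t ht
    have h1 : ((t : ℝ) + 1) ≠ 0 := by positivity
    have h2 : ((t : ℝ) + 2) ≠ 0 := by positivity
    have hc := choose_two n t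
    field_simp
    linear_combination -(p ^ (t + 2) * q ^ (n - t)) * hc
  rw [Finset.sum_congr rfl key, binom_tail2 n p q]
  ring

lemma sum_div_add_two (n : ℕ) (p q : ℝ) (hp : p ≠ 0) :
    ∑ t ∈ range (n + 1), (n.choose t : ℝ) * p ^ t * q ^ (n - t) * (1 / ((t : ℝ) + 2))
      = ((p + q) ^ (n + 1) - q ^ (n + 1)) / (((n : ℝ) + 1) * p)
        - ((p + q) ^ (n + 2) - q ^ (n + 2) - ((n : ℝ) + 2) * p * q ^ (n + 1))
            / (((n : ℝ) + 1) * ((n : ℝ) + 2) * p ^ 2) := by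
  rw [← sum_div_one n p q hp, ← sum_div_two n p q hp, ← Finset.sum_sub_distrib]
  refine Finset.sum_congr rfl fun t ht => ?_
  have h1 : ((t : ℝ) + 1) ≠ 0 := by positivity
  have h2 : ((t : ℝ) + 2) ≠ 0 := by positivity
  field_simp
  ring

end helpers

theorem binom_ratio_one_plus (m k : ℕ) (hm : 1 ≤ m) (hk : k ≤ m) :
    ∑ i ∈ Finset.range (k + 1), ∑ j ∈ Finset.range (m - k + 1),
      ((Nat.choose k i : ℝ) * (1 / m) ^ i * (1 - 1 / m) ^ (k - i)) *
        ((Nat.choose (m - k) j : ℝ) * (1 / m) ^ j * (1 - 1 / m) ^ (m - k - j)) *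
        ((i : ℝ) / (1 + (i : ℝ) + (j : ℝ)))
    = ((k : ℝ) / m) * (1 + m * (1 - 1 / (m : ℝ)) ^ (m + 1)) / (m + 1) := by
  rcases Nat.eq_zero_or_pos k with hk0 | hkpos
  · subst hk0; simp
  have hm0 : (m : ℝ) ≠ 0 := Nat.cast_ne_zero.2 (by omega)
  set p : ℝ := 1 / m with hp_def
  set q : ℝ := 1 - 1 / m with hq_def
  have hp : p ≠ 0 := one_div_ne_zero hm0
  set K := k - 1 with hK_def
  set b := m - k with hb_def
  set n := m - 1 with hn_def
  have hK : K + 1 = k := by omega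
  have hn : n + 1 = m := by omega
  have hKb : K + b = n := by omega
  have hKc : ((K : ℝ) + 1) = (k : ℝ) := by exact_mod_cast congrArg (Nat.cast : ℕ → ℝ) hK
  have main : ∑ i ∈ Finset.range (k + 1), ∑ j ∈ Finset.range (b + 1),
      ((Nat.choose k i : ℝ) * p ^ i * q ^ (k - i)) *
        ((Nat.choose b j : ℝ) * p ^ j * q ^ (b - j)) *
        ((i : ℝ) / (1 + (i : ℝ) + (j : ℝ)))
      = (k : ℝ) * p * ∑ t ∈ Finset.range (n + 1),
          ((n.choose t : ℝ) * p ^ t * q ^ (n - t) * (1 / ((t : ℝ) + 2))) := by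
    rw [Finset.sum_range_succ']
    have h0 : (∑ j ∈ Finset.range (b + 1),
        ((Nat.choose k 0 : ℝ) * p ^ 0 * q ^ (k - 0)) *
          ((Nat.choose b j : ℝ) * p ^ j * q ^ (b - j)) *
          ((0 : ℕ) / (1 + ((0 : ℕ) : ℝ) + (j : ℝ)))) = 0 := by
      simp
    rw [h0, add_zero]
    have h1 : ∀ i ∈ Finset.range k, (∑ j ∈ Finset.range (b + 1),
        ((Nat.choose k (i + 1) : ℝ) * p ^ (i + 1) * q ^ (k - (i + 1))) *
          ((Nat.choose b j : ℝ) * p ^ j * q ^ (b - j)) *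
          (((i + 1 : ℕ) : ℝ) / (1 + ((i + 1 : ℕ) : ℝ) + (j : ℝ))))
        = (k : ℝ) * p * ∑ j ∈ Finset.range (b + 1),
            ((Nat.choose K i : ℝ) * p ^ i * q ^ (K - i)) *
              ((Nat.choose b j : ℝ) * p ^ j * q ^ (b - j)) *
              (1 / (((i + j : ℕ) : ℝ) + 2)) := by
      intro i hi
      rw [Finset.mul_sum]
      refine Finset.sum_congr rfl fun j hj => ?_
      have hsub : k - (i + 1) = K - i := by omega
      have hc := choose_one K i
      rw [hK, hKc] at hc
      have hd1 : (1 + (((i : ℝ)) + 1) + (j : ℝ)) ≠ 0 := by positivity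
      have hd2 : ((i : ℝ) + (j : ℝ) + 2) ≠ 0 := by positivity
      rw [hsub]
      push_cast
      linear_combination (p ^ (i + 1) * q ^ (K - i) *
        ((b.choose j : ℝ) * p ^ j * q ^ (b - j)) / ((i : ℝ) + (j : ℝ) + 2)) * hc
    rw [Finset.sum_congr rfl h1, ← Finset.mul_sum]
    congr 1
    rw [← hK]
    rw [conv_lemma K b p q (fun t => 1 / ((t : ℝ) + 2)), hKb]
  rw [main, sum_div_add_two n p q hp]
  have hpq : p + q = 1 := by rw [hp_def, hq_def]; ring
  rw [hpq, one_pow, one_pow]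
  rw [show n + 2 = m + 1 from by omega, hn]
  have hnc : (n : ℝ) = (m : ℝ) - 1 := by
    have := congrArg (Nat.cast : ℕ → ℝ) hn
    push_cast at this
    linarith
  rw [hnc]
  have e1 : (m : ℝ) - 1 + 1 = (m : ℝ) := by ring
  have e2 : (m : ℝ) - 1 + 2 = (m : ℝ) + 1 := by ring
  rw [e1, e2]
  have hm1 : (m : ℝ) + 1 ≠ 0 := by positivity
  rw [hp_def]
  field_simp
  ring
end

section
/- With b̄ = (n+1)/(1 + n(1-1/n)^(n+1)), for every integer n ≥ 1 we have min{1 - 3(1-1/n)/(3b̄ - b̄/n), (5 - 1/n)/(b̄(3 - 1/n))} ≥ 5/(3e). -/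
set_option maxHeartbeats 1000000

theorem robustness_constant_bound (n : ℕ) (hn : 1 ≤ n) :
    min (1 - 3 * (1 - 1 / (n : ℝ)) /
          (3 * ((n + 1) / (1 + n * (1 - 1 / n) ^ (n + 1)))
            - ((n + 1) / (1 + n * (1 - 1 / n) ^ (n + 1))) / n))
        ((5 - 1 / (n : ℝ)) /
          (((n + 1) / (1 + n * (1 - 1 / n) ^ (n + 1))) * (3 - 1 / n)))
    ≥ 5 / (3 * Real.exp 1) := by
  rcases lt_or_ge n 5 with h5 | h5
  · have hE1 : (2.7182818283 : ℝ) < Real.exp 1 := Real.exp_one_gt_d9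
    have hEpos : (0:ℝ) < Real.exp 1 := Real.exp_pos 1
    rw [ge_iff_le, le_min_iff]
    interval_cases n <;> norm_num <;>
      (try constructor) <;> (try rw [div_le_iff₀ (by positivity)]) <;> nlinarith [hE1]
  ·
    have hE1 : (2.7182818283 : ℝ) < Real.exp 1 := Real.exp_one_gt_d9
    have hE2 : Real.exp 1 < 2.7182818286 := Real.exp_one_lt_d9
    have hEpos : (0:ℝ) < Real.exp 1 := Real.exp_pos 1
    set x : ℝ := (n : ℝ) with hxdef
    have hx5 : (5:ℝ) ≤ x := by rw [hxdef]; exact_mod_cast h5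
    have hx0 : (0:ℝ) < x := by linarith
    have hxne : x ≠ 0 := ne_of_gt hx0
    have ht5 : 1/x ≤ 1/5 := by apply one_div_le_one_div_of_le <;> linarith
    have ht0 : 0 < 1/x := by positivity
    have h0 : (0:ℝ) ≤ 1 - 1/x := by linarith
    set a : ℝ := (1 - 1/x) ^ (n+1) with hadef
    have ha0 : 0 ≤ a := pow_nonneg h0 _
    clear_value x a
    -- upper bound : E * (x*a) ≤ x - 1
    have hup : Real.exp 1 * (x * a) ≤ x - 1 := by
      have h1 : 1 - 1/x ≤ Real.exp (-(1/x)) := by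
        have := Real.add_one_le_exp (-(1/x)); linarith
      have h2 : (1 - 1/x)^n ≤ Real.exp (-(1/x)) ^ n := pow_le_pow_left₀ h0 h1 n
      have h3 : Real.exp (-(1/x)) ^ n = Real.exp (-1) := by
        rw [← Real.exp_nat_mul]
        congr 1
        rw [hxdef]
        field_simp
      have h4 : a = (1 - 1/x)^n * (1 - 1/x) := by rw [hadef, pow_succ]
      have h5' : a ≤ Real.exp (-1) * (1 - 1/x) := by
        rw [h4]
        apply mul_le_mul_of_nonneg_right _ h0
        rw [← h3]; exact h2
      have hee : Real.exp 1 * Real.exp (-1) = 1 := by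
        rw [← Real.exp_add]; norm_num
      calc Real.exp 1 * (x * a) ≤ Real.exp 1 * (x * (Real.exp (-1) * (1 - 1/x))) := by
            apply mul_le_mul_of_nonneg_left _ hEpos.le
            exact mul_le_mul_of_nonneg_left h5' hx0.le
        _ = (Real.exp 1 * Real.exp (-1)) * (x * (1 - 1/x)) := by ring
        _ = x * (1 - 1/x) := by rw [hee]; ring
        _ = x - 1 := by field_simp
    -- lower bound : x - 1.84 ≤ E * (x*a)
    have hlo : x - 184/100 ≤ Real.exp 1 * (x * a) := by
      obtain ⟨s, hsdef⟩ : ∃ s:ℝ, s = 1/x + (1/x)^2/2 + (1/x)^3 := ⟨_, rfl⟩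
      have hs0 : 0 ≤ s := by rw [hsdef]; positivity
      have hq : 1 + s + s^2/2 ≤ Real.exp s := Real.quadratic_le_exp_of_nonneg hs0
      have ht2 : (1/x)^2 ≤ 1/25 := by nlinarith [ht5, ht0]
      have ht4 : (1/x)^4 ≤ 1/625 := by nlinarith [ht2, sq_nonneg (1/x), sq_nonneg ((1/x)^2)]
      have hbra : (0:ℝ) ≤ 1/2 - 3*(1/x)/8 - 5*(1/x)^2/8 - (1/x)^4/2 := by linarith
      have hcube : (0:ℝ) ≤ (1/x)^3 * (1/2 - 3*(1/x)/8 - 5*(1/x)^2/8 - (1/x)^4/2) :=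
        mul_nonneg (by positivity) hbra
      have hpoly : (1:ℝ) ≤ (1 - 1/x) * (1 + s + s^2/2) := by
        rw [hsdef]; nlinarith [hcube]
      have h1 : (1:ℝ) ≤ (1 - 1/x) * Real.exp s := by
        calc (1:ℝ) ≤ (1 - 1/x) * (1 + s + s^2/2) := hpoly
          _ ≤ (1 - 1/x) * Real.exp s := mul_le_mul_of_nonneg_left hq h0
      have h2 : Real.exp (-s) ≤ 1 - 1/x := by
        have hp := Real.exp_pos s
        have hmul : Real.exp (-s) * Real.exp s = 1 := by rw [← Real.exp_add]; simp
        nlinarith [h1, hmul, hp, Real.exp_pos (-s)]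
      have h3 : Real.exp (-s) ^ (n+1) ≤ a := by
        rw [hadef]
        exact pow_le_pow_left₀ (Real.exp_pos _).le h2 _
      have h4 : Real.exp (-s) ^ (n+1) = Real.exp (-((x+1)*s)) := by
        rw [← Real.exp_nat_mul]
        congr 1
        rw [hxdef]
        push_cast
        ring
      have h5' : 2 - (x+1)*s ≤ Real.exp 1 * a := by
        have hadd := Real.add_one_le_exp (1 - (x+1)*s)
        have heq : Real.exp 1 * Real.exp (-((x+1)*s)) = Real.exp (1 - (x+1)*s) := by
          rw [← Real.exp_add]; ring_nf
        calc 2 - (x+1)*s = (1 - (x+1)*s) + 1 := by ring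
          _ ≤ Real.exp (1 - (x+1)*s) := hadd
          _ = Real.exp 1 * Real.exp (-((x+1)*s)) := heq.symm
          _ ≤ Real.exp 1 * a := by
              apply mul_le_mul_of_nonneg_left _ hEpos.le
              rw [← h4]; exact h3
      have expand : x * ((x+1)*s) = x + 3/2 + (3/2)*(1/x) + (1/x)^2 := by
        rw [hsdef]; field_simp; ring
      have hxs : x * ((x+1)*s) ≤ x + 184/100 := by rw [expand]; linarith
      have hmul2 := mul_le_mul_of_nonneg_left h5' hx0.le
      linarith [hmul2, hxs]
    -- main goal
    obtain ⟨D, hDdef⟩ : ∃ D:ℝ, D = 1 + x * a := ⟨_, rfl⟩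
    rw [show (1:ℝ) + x*a = D from hDdef.symm]
    have hD1 : (1:ℝ) ≤ D := by rw [hDdef]; nlinarith [mul_nonneg hx0.le ha0]
    have hD0 : (0:ℝ) < D := by linarith
    have hDne : D ≠ 0 := ne_of_gt hD0
    have hED : Real.exp 1 * D ≤ Real.exp 1 + x - 1 := by rw [hDdef]; nlinarith [hup]
    have hED2 : Real.exp 1 + x - 184/100 ≤ Real.exp 1 * D := by rw [hDdef]; nlinarith [hlo]
    have hx1ne : x + 1 ≠ 0 := by positivity
    have h3xne : 3*x - 1 ≠ 0 := by nlinarith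
    rw [ge_iff_le, le_min_iff]
    constructor
    · -- first component
      have hden : 3 * ((x + 1) / D) - ((x + 1) / D) / x = (x+1)*(3*x-1)/(x*D) := by
        field_simp
      rw [hden]
      have hfrac : 3 * (1 - 1/x) / ((x+1)*(3*x-1)/(x*D)) = 3*(x-1)*D/((x+1)*(3*x-1)) := by
        field_simp
      rw [hfrac]
      have hkey1 : (3*(x-1)*D) * (3*Real.exp 1) ≤ (3*Real.exp 1 - 5) * ((x+1)*(3*x-1)) := by
        nlinarith [mul_le_mul_of_nonneg_left hED (by linarith : (0:ℝ) ≤ 9*(x-1)),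
          hE1, hE2, hx5, hD1, hEpos,
          mul_nonneg (by linarith : (0:ℝ) ≤ Real.exp 1 - 2.7182818283)
            (by nlinarith : (0:ℝ) ≤ 9*x^2 - 3*x), sq_nonneg (x-5)]
      have hrw : (1:ℝ) - 5/(3*Real.exp 1) = (3*Real.exp 1 - 5)/(3*Real.exp 1) := by
        field_simp
      have hfin : 3*(x-1)*D/((x+1)*(3*x-1)) ≤ 1 - 5/(3*Real.exp 1) := by
        rw [hrw, div_le_div_iff₀ (by nlinarith) (by positivity)]
        linarith [hkey1]
      linarith
    · -- second component
      have hB : (5 - 1/x)/(((x+1)/D)*(3-1/x)) = (5*x-1)*D/((x+1)*(3*x-1)) := by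
        field_simp
      rw [hB, div_le_div_iff₀ (by positivity) (by nlinarith)]
      nlinarith [mul_le_mul_of_nonneg_left hED2 (by linarith : (0:ℝ) ≤ 3*(5*x-1)),
        hE1, hE2, hx5, hD1, hEpos]
end

section
/- The sequence a_n = (1 + n(1 - 1/n)^(n+1))/(n+1) is decreasing in n (for integers n ≥ 1) and converges to 1/e as n → ∞. -/
open Filter intervalIntegral

/-- Pointwise key inequality: for `x ∈ [0,1]` and `n ≥ 1`,
`(1 - x/n)^n ≤ (1 - x/(n+1))^(n+1)`. -/
lemma key_pointwise (n : ℕ) (hn : 1 ≤ n) (x : ℝ) (hx0 : 0 ≤ x) (hx1 : x ≤ 1) :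
    (1 - x / n) ^ n ≤ (1 - x / (n + 1 : ℝ)) ^ (n + 1) := by
  have hn1 : (1 : ℝ) ≤ n := by exact_mod_cast hn
  have hnpos : (0 : ℝ) < n := by linarith
  set y : ℝ := 1 - x / n with hy
  set z : ℝ := 1 - x / (n + 1 : ℝ) with hz
  have hy0 : 0 ≤ y := by
    rw [hy, sub_nonneg]
    exact (div_le_one hnpos).2 (hx1.trans hn1)
  have hzy : y ≤ z := by
    have : x / (n + 1 : ℝ) ≤ x / n := by
      apply div_le_div_of_nonneg_left hx0 hnpos; linarith
    simp only [hy, hz]; linarith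
  have hz0 : 0 ≤ z := hy0.trans hzy
  rcases eq_or_lt_of_le hy0 with h0 | hypos
  · have : y ^ n = 0 := by rw [← h0]; exact zero_pow (by omega)
    rw [this]; positivity
  · -- Bernoulli with t = (z - y)/y
    set t : ℝ := (z - y) / y with ht
    have ht0 : 0 ≤ t := div_nonneg (by linarith) hy0
    have hber : 1 + (n + 1 : ℕ) * t ≤ (1 + t) ^ (n + 1) :=
      one_add_mul_le_pow (by linarith) (n + 1)
    have hzyt : z = y * (1 + t) := by
      rw [ht]; field_simp; ring
    have hkey : y + (n + 1 : ℝ) * (z - y) = 1 := by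
      simp only [hy, hz]
      field_simp
      ring
    calc y ^ n = y ^ n * (y + (n + 1 : ℝ) * (z - y)) := by rw [hkey, mul_one]
      _ = y ^ (n + 1) * (1 + (n + 1 : ℝ) * t) := by
          rw [ht]; field_simp; ring
      _ ≤ y ^ (n + 1) * (1 + t) ^ (n + 1) := by
          apply mul_le_mul_of_nonneg_left _ (by positivity)
          exact_mod_cast hber
      _ = z ^ (n + 1) := by rw [hzyt, mul_pow]

/-- The integral of `(1 - x/n)^n` over `[0,1]`. -/
lemma integral_val (n : ℕ) (hn : 1 ≤ n) :
    (∫ x in (0:ℝ)..1, (1 - x / n) ^ n)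
      = ((n:ℝ) ^ (n + 1) - ((n:ℝ) - 1) ^ (n + 1)) / ((n + 1) * (n:ℝ) ^ n) := by
  have hnpos : (0 : ℝ) < n := by exact_mod_cast hn
  have h1 : ∀ x : ℝ, (1 - x / n) ^ n = (((n:ℝ) - x) ^ n) / (n:ℝ) ^ n := by
    intro x
    rw [← div_pow]
    congr 1
    field_simp
  simp_rw [h1]
  rw [intervalIntegral.integral_div]
  rw [intervalIntegral.integral_comp_sub_left (fun u => u ^ n) (n:ℝ)]
  rw [integral_pow]
  have hne : ((n:ℝ) + 1) ≠ 0 := by positivity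
  have hne2 : ((n:ℝ)) ^ n ≠ 0 := by positivity
  field_simp
  rw [sub_zero]

/-- `a n` in integral form. -/
lemma a_eq (n : ℕ) (hn : 1 ≤ n) :
    (1 + (n : ℝ) * (1 - 1 / (n : ℝ)) ^ (n + 1)) / ((n : ℝ) + 1)
      = 1 - ∫ x in (0:ℝ)..1, (1 - x / n) ^ n := by
  have hnpos : (0 : ℝ) < n := by exact_mod_cast hn
  rw [integral_val n hn]
  have h1 : (1 - 1 / (n : ℝ)) = ((n:ℝ) - 1) / n := by field_simp
  rw [h1, div_pow]
  have hne : ((n:ℝ) + 1) ≠ 0 := by positivity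
  have hne2 : ((n:ℝ)) ^ n ≠ 0 := by positivity
  have hne3 : ((n:ℝ)) ^ (n+1) ≠ 0 := by positivity
  field_simp
  ring

lemma cont_integrand (n : ℕ) :
    IntervalIntegrable (fun x : ℝ => (1 - x / n) ^ n) MeasureTheory.volume 0 1 := by
  apply Continuous.intervalIntegrable
  continuity

theorem a_n_decreasing_and_tendsto :
    (∀ n : ℕ, 1 ≤ n →
      (1 + (n + 1 : ℝ) * (1 - 1 / (n + 1 : ℝ)) ^ (n + 2)) / ((n + 1 : ℝ) + 1)
        ≤ (1 + (n : ℝ) * (1 - 1 / (n : ℝ)) ^ (n + 1)) / ((n : ℝ) + 1)) ∧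
    Filter.Tendsto
      (fun n : ℕ => (1 + (n : ℝ) * (1 - 1 / (n : ℝ)) ^ (n + 1)) / ((n : ℝ) + 1))
      Filter.atTop (nhds (1 / Real.exp 1)) := by
  constructor
  · intro n hn
    have h1 := a_eq n hn
    have h2 := a_eq (n + 1) (by omega)
    have hcast : ((n + 1 : ℕ) : ℝ) = (n : ℝ) + 1 := by push_cast; ring
    rw [hcast] at h2
    rw [h1, h2]
    have hmono : (∫ x in (0:ℝ)..1, (1 - x / n) ^ n)
        ≤ ∫ x in (0:ℝ)..1, (1 - x / ((n:ℝ) + 1)) ^ (n + 1) := by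
      apply intervalIntegral.integral_mono_on zero_le_one (cont_integrand n)
      · have := cont_integrand (n + 1)
        rw [hcast] at this
        exact this
      · intro x hx
        exact key_pointwise n hn x hx.1 hx.2
    linarith
  · -- limit
    have hmain : Filter.Tendsto
        (fun n : ℕ => 1 / ((n:ℝ) + 1)
          + ((n:ℝ) / ((n:ℝ) + 1)) * ((1 + (-1) / (n:ℝ)) ^ n * (1 - 1 / (n:ℝ))))
        Filter.atTop (nhds (1 / Real.exp 1)) := by
      have h0 : Filter.Tendsto (fun n : ℕ => 1 / ((n:ℝ) + 1)) atTop (nhds 0) :=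
        tendsto_one_div_add_atTop_nhds_zero_nat
      have hfrac : Filter.Tendsto (fun n : ℕ => (n:ℝ) / ((n:ℝ) + 1)) atTop (nhds 1) := by
        have : ∀ n : ℕ, (n:ℝ) / ((n:ℝ) + 1) = 1 - 1 / ((n:ℝ) + 1) := by
          intro n
          have : ((n:ℝ) + 1) ≠ 0 := by positivity
          field_simp
          ring
        simp_rw [this]
        simpa using (tendsto_const_nhds (x := (1:ℝ))).sub h0
      have hexp : Filter.Tendsto (fun n : ℕ => (1 + (-1) / (n:ℝ)) ^ n) atTop
          (nhds (Real.exp (-1))) := Real.tendsto_one_add_div_pow_exp (-1)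
      have hone : Filter.Tendsto (fun n : ℕ => 1 - 1 / (n:ℝ)) atTop (nhds 1) := by
        simpa using (tendsto_const_nhds (x := (1:ℝ))).sub
          (tendsto_one_div_atTop_nhds_zero_nat)
      have := h0.add (hfrac.mul (hexp.mul hone))
      simp only [zero_add, one_mul, mul_one] at this
      convert this using 2
      rw [Real.exp_neg]
      simp
    apply hmain.congr'
    filter_upwards [Filter.eventually_ge_atTop 1] with n hn
    have hnpos : (0 : ℝ) < n := by exact_mod_cast hn
    have h1 : (1 : ℝ) + (-1) / n = 1 - 1 / n := by ring
    rw [h1]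
    have hne : ((n:ℝ) + 1) ≠ 0 := by positivity
    rw [pow_succ]
    rw [eq_div_iff hne]
    field_simp
end

section
/- Fix integers n ≥ 1 and a real α ∈ (0,1], b̄ ≥ 2. Consider the linear program: minimize Σ_{k=0}^{n-1} x_k/(1+k) subject to b̄ Σ_{k=1}^{n-1} ((1-α)·k/(1+k) + α·k/(2+k)) x_k ≤ 1-α, Σ_{k=0}^{n-1} x_k = 1, and x_k ≥ 0 for all k. Then every feasible point has objective value at least 1 - 3(1-α)/(3b̄ - αb̄). -/
theorem lp_lower_bound (n : ℕ) (hn : 1 ≤ n) (α b : ℝ)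
    (hα : α ∈ Set.Ioc (0:ℝ) 1) (hb : 2 ≤ b)
    (x : ℕ → ℝ) (hx : ∀ k, 0 ≤ x k)
    (hsum : ∑ k ∈ Finset.range n, x k = 1)
    (hbudget : b * ∑ k ∈ Finset.Ico 1 n,
      ((1 - α) * k / (1 + (k : ℝ)) + α * k / (2 + (k : ℝ))) * x k ≤ 1 - α) :
    ∑ k ∈ Finset.range n, x k / (1 + (k : ℝ)) ≥ 1 - 3 * (1 - α) / (3 * b - α * b) := by
  obtain ⟨hα0, hα1⟩ := hα
  have hb0 : (0:ℝ) < b := by linarith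
  have h3α : (0:ℝ) < 3 - α := by linarith
  set S := ∑ k ∈ Finset.Ico 1 n, (k : ℝ) / (1 + (k : ℝ)) * x k with hS
  -- key pointwise bound
  have hkey : (3 - α) / 3 * S ≤
      ∑ k ∈ Finset.Ico 1 n, ((1 - α) * k / (1 + (k : ℝ)) + α * k / (2 + (k : ℝ))) * x k := by
    rw [hS, Finset.mul_sum]
    apply Finset.sum_le_sum
    intro k hk
    obtain ⟨hk1, _⟩ := Finset.mem_Ico.mp hk
    have hk1' : (1:ℝ) ≤ k := by exact_mod_cast hk1
    have h1 : (0:ℝ) < 1 + k := by linarith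
    have h2 : (0:ℝ) < 2 + k := by linarith
    have hfrac : (2:ℝ)/3 * ((k:ℝ)/(1+k)) ≤ (k:ℝ)/(2+k) := by
      rw [show (2:ℝ)/3 * ((k:ℝ)/(1+k)) = (2*(k:ℝ))/(3*(1+k)) by field_simp]
      rw [div_le_div_iff₀ (by linarith) h2]
      nlinarith
    have hcoef : (3 - α) / 3 * ((k:ℝ) / (1 + k)) ≤
        (1 - α) * k / (1 + (k : ℝ)) + α * k / (2 + (k : ℝ)) := by
      have : (3 - α) / 3 * ((k:ℝ) / (1 + k)) =
          (1 - α) * k / (1 + (k:ℝ)) + α * ((2:ℝ)/3 * ((k:ℝ)/(1+k))) := by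
        field_simp
        ring
      rw [this]
      have := mul_le_mul_of_nonneg_left hfrac hα0.le
      have heq : α * ((k:ℝ)/(2+k)) = α * k / (2 + (k:ℝ)) := by ring
      linarith [heq ▸ this]
    calc (3 - α) / 3 * ((k:ℝ) / (1 + k) * x k)
        = ((3 - α) / 3 * ((k:ℝ) / (1 + k))) * x k := by ring
      _ ≤ ((1 - α) * k / (1 + (k : ℝ)) + α * k / (2 + (k : ℝ))) * x k :=
          mul_le_mul_of_nonneg_right hcoef (hx k)
  -- bound on S
  have hSbound : S ≤ 3 * (1 - α) / (3 * b - α * b) := by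
    have h1 : b * ((3 - α) / 3 * S) ≤ 1 - α := by
      calc b * ((3 - α) / 3 * S) ≤ b * ∑ k ∈ Finset.Ico 1 n,
            ((1 - α) * k / (1 + (k : ℝ)) + α * k / (2 + (k : ℝ))) * x k :=
          mul_le_mul_of_nonneg_left hkey hb0.le
        _ ≤ 1 - α := hbudget
    rw [le_div_iff₀ (by nlinarith : (0:ℝ) < 3 * b - α * b)]
    nlinarith [h1]
  -- rewrite objective
  have hobj : ∑ k ∈ Finset.range n, x k / (1 + (k : ℝ)) = 1 - S := by
    have hsplit : ∀ f : ℕ → ℝ, ∑ k ∈ Finset.range n, f k = f 0 + ∑ k ∈ Finset.Ico 1 n, f k := by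
      intro f
      rw [Finset.range_eq_Ico, Finset.sum_eq_sum_Ico_succ_bot hn f]
    have h1 : ∑ k ∈ Finset.range n, x k / (1 + (k : ℝ)) =
        ∑ k ∈ Finset.range n, (x k - (k : ℝ) / (1 + (k : ℝ)) * x k) := by
      apply Finset.sum_congr rfl
      intro k _
      have h1 : (0:ℝ) < 1 + k := by positivity
      field_simp
      ring
    rw [h1, Finset.sum_sub_distrib, hsum, hS]
    rw [hsplit fun k => (k : ℝ) / (1 + (k : ℝ)) * x k]
    norm_num
  rw [hobj]
  linarith
end

section
/- Fix an integer n ≥ 1 and reals α ∈ (0,1], b̄ > 0. Consider minimizing the ratio (Σ_{k=0}^{n-1} x_k/(1+k)) / (b̄ Σ_{k=0}^{n-1} x_k/(2+k)) over vectors (x_0, ..., x_{n-1}) with x_k ≥ 0, Σ x_k = 1, satisfying (1-α) Σ_{k=0}^{n-1} x_k/(2+k) ≥ Σ_{k=1}^{n-1} ((1-α)·k/(1+k) + α·k/(2+k)) x_k. Then every feasible point has ratio at least (5-α)/(b̄(3-α)). -/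
theorem lp_ratio_lower_bound (n : ℕ) (hn : 1 ≤ n) (α b : ℝ)
    (hα : α ∈ Set.Ioc (0:ℝ) 1) (hb : 0 < b)
    (x : ℕ → ℝ) (hx : ∀ k, 0 ≤ x k)
    (hsum : ∑ k ∈ Finset.range n, x k = 1)
    (hconstr : (1 - α) * ∑ k ∈ Finset.range n, x k / (2 + (k : ℝ))
      ≥ ∑ k ∈ Finset.Ico 1 n,
          ((1 - α) * k / (1 + (k : ℝ)) + α * k / (2 + (k : ℝ))) * x k) :
    (∑ k ∈ Finset.range n, x k / (1 + (k : ℝ)))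
      / (b * ∑ k ∈ Finset.range n, x k / (2 + (k : ℝ)))
    ≥ (5 - α) / (b * (3 - α)) := by
  obtain ⟨hα0, hα1⟩ := hα
  set N := ∑ k ∈ Finset.range n, x k / (1 + (k : ℝ)) with hNdef
  set D := ∑ k ∈ Finset.range n, x k / (2 + (k : ℝ)) with hDdef
  have h3 : (0:ℝ) < 3 - α := by linarith
  -- D is positive
  have hD : 0 < D := by
    have h1 : (1:ℝ)/(2+(n:ℝ)) ≤ D := by
      have hc : (1:ℝ)/(2+(n:ℝ)) = ∑ k ∈ Finset.range n, x k * (1/(2+(n:ℝ))) := by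
        rw [← Finset.sum_mul, hsum, one_mul]
      rw [hc, hDdef]
      refine Finset.sum_le_sum fun k hk => ?_
      have hk' : (k:ℝ) ≤ n := by
        exact_mod_cast le_of_lt (Finset.mem_range.mp hk)
      rw [div_eq_mul_one_div (x k)]
      have h2k : (0:ℝ) < 2 + (k:ℝ) := by positivity
      have hle : (2:ℝ) + (k:ℝ) ≤ 2 + (n:ℝ) := by linarith
      exact mul_le_mul_of_nonneg_left (one_div_le_one_div_of_le h2k hle) (hx k)
    have : (0:ℝ) < 1/(2+(n:ℝ)) := by positivity
    linarith
  -- extend the constraint sum to range n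
  have hsplit : ∑ k ∈ Finset.Ico 1 n,
      ((1 - α) * k / (1 + (k : ℝ)) + α * k / (2 + (k : ℝ))) * x k
      = ∑ k ∈ Finset.range n,
      ((1 - α) * k / (1 + (k : ℝ)) + α * k / (2 + (k : ℝ))) * x k := by
    rw [Finset.range_eq_Ico, Finset.sum_eq_sum_Ico_succ_bot hn]
    norm_num
  -- pointwise inequality
  have hterm : ∀ k ∈ Finset.range n,
      (6 - 2*α) * (x k / (2 + (k:ℝ))) ≤ (3 - α) * (x k / (1 + (k:ℝ)))
        + ((1 - α) * k / (1 + (k : ℝ)) + α * k / (2 + (k : ℝ))) * x k := by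
    intro k _
    have hk1 : (0:ℝ) < 1 + k := by positivity
    have hk2 : (0:ℝ) < 2 + k := by positivity
    have hkk : 0 ≤ (k:ℝ) * ((k:ℝ) - 1) := by
      rcases Nat.eq_zero_or_pos k with h | h
      · simp [h]
      · have h1 : (1:ℝ) ≤ k := by exact_mod_cast h
        nlinarith
    have expand : (3 - α) * (x k / (1 + (k:ℝ)))
        + ((1 - α) * k / (1 + (k : ℝ)) + α * k / (2 + (k : ℝ))) * x k
        - (6 - 2*α) * (x k / (2 + (k:ℝ)))
        = x k * ((k:ℝ) * ((k:ℝ) - 1)) / ((1 + (k:ℝ)) * (2 + (k:ℝ))) := by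
      field_simp
      ring
    have hnn : 0 ≤ x k * ((k:ℝ) * ((k:ℝ) - 1)) / ((1 + (k:ℝ)) * (2 + (k:ℝ))) :=
      div_nonneg (mul_nonneg (hx k) hkk) (le_of_lt (mul_pos hk1 hk2))
    linarith
  have hsum2 := Finset.sum_le_sum hterm
  rw [Finset.sum_add_distrib, ← Finset.mul_sum, ← Finset.mul_sum, ← hNdef, ← hDdef,
    ← hsplit] at hsum2
  -- main inequality
  have hmain : (5 - α) * D ≤ (3 - α) * N := by linarith
  rw [ge_iff_le, div_le_div_iff₀ (mul_pos hb h3) (mul_pos hb hD)]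
  nlinarith [mul_le_mul_of_nonneg_left hmain hb.le]
end
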